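/- Let (r,ρ) ∈ 𝒩𝒞 and let M = varprojlim(M_{r,ρ}, σ_{r,ρ}). Then the set E(M) of end-points of M is dense in M. -/

import Mathlib

/-- `(r, ρ) ∈ 𝒩𝒞`: `0 < r < 1 < ρ` and `r^k = ρ^ℓ` only for `k = ℓ = 0`. -/
def NC (r ρ : ℝ) : Prop :=
  0 < r ∧ r < 1 ∧ 1 < ρ ∧ ∀ k l : ℤ, r ^ k = ρ ^ l ↔ k = 0 ∧ l = 0

/-- The Mahavier product `M_{r,ρ} ⊆ [0,1]^ℕ`. -/
def Mset (r ρ : ℝ) : Set (ℕ → ℝ) :=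
  {x | (∀ i, x i ∈ Set.Icc (0:ℝ) 1) ∧ ∀ i, x (i + 1) = r * x i ∨ x (i + 1) = ρ * x i}

/-- The shift map `σ_{r,ρ}` on `M_{r,ρ}`. -/
def shiftM (r ρ : ℝ) (x : Mset r ρ) : Mset r ρ :=
  ⟨fun i => x.1 (i + 1), fun i => x.2.1 (i + 1), fun i => x.2.2 (i + 1)⟩

/-- The inverse limit `varprojlim(X, f)` of a single map `f : X → X`. -/
def invLimit {X : Type*} (f : X → X) : Set (ℕ → X) :=
  {x | ∀ i, x i = f (x (i + 1))}

/-- The shift map on the inverse limit `varprojlim(X, f)`. -/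
def invShift {X : Type*} (f : X → X) (x : invLimit f) : invLimit f :=
  ⟨fun i => x.1 (i + 1), fun i => x.2 (i + 1)⟩

/-- A subset `A` of a topological space is an arc if it is homeomorphic to `[0,1]`. -/
def IsArc {X : Type*} [TopologicalSpace X] (A : Set X) : Prop :=
  Nonempty (Set.Icc (0:ℝ) 1 ≃ₜ A)

/-- `x` is an end-point of the arc `A` if some homeomorphism `φ : [0,1] → A` has `φ 0 = x`. -/
def IsEndpointOfArc {X : Type*} [TopologicalSpace X] (A : Set X) (x : X) : Prop :=
  ∃ φ : Set.Icc (0:ℝ) 1 ≃ₜ A, ((φ ⟨0, by norm_num⟩ : A) : X) = x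

/-- `x` is an end-point of the space `X` if it is an end-point of every arc in `X`
containing it. -/
def IsEndpoint {X : Type*} [TopologicalSpace X] (x : X) : Prop :=
  ∀ A : Set X, IsArc A → x ∈ A → IsEndpointOfArc A x

/-!
A point of `varprojlim(M_{r,ρ}, σ_{r,ρ})` is a bi-infinite sequence `(y_n)_{n ∈ ℤ}` in `[0, 1]`
with `y_{n+1} ∈ {r y_n, ρ y_n}`, and its topology is that of coordinatewise convergence.

Points with `sup y = 1` are end-points. The points of a connected set whose coordinates are
positive all follow the same pattern of `r`- and `ρ`-steps, so they are scalar multiples of each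
other. Along an arc through such a point `x` the coordinate `y_0` is therefore injective; if `x`
were not an end of the arc, `y_0` would exceed its value at `x` somewhere, giving a multiple `c • x`
with `c > 1` that still lies in `[0, 1]`, impossible when `sup y = 1`.

These points are dense. A positive `x` with `sup y < 1` is multiplied by some `μ > 1` close to
`1`; after time `k` the sequence goes down `i` times by `r` and up `j` times by `ρ`, reaching
exactly `1`, and then descends by `r` forever. Suitable `μ, i, j` exist because the products
`r^i ρ^j` (`i, j ∈ ℕ`) are dense in `(0, ∞)`, by Kronecker's theorem, as `log ρ / -log r` is
irrational. The zero point is approximated by a single peak placed far to the right.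
-/

open Set Filter Topology

lemma ContinuousOn.exists_lt_of_injOn_Icc {α δ : Type*} [ConditionallyCompleteLinearOrder α]
    [TopologicalSpace α] [OrderTopology α] [DenselyOrdered α] [LinearOrder δ]
    [TopologicalSpace δ] [OrderClosedTopology δ] {f : α → δ} {a b s : α}
    (hf : ContinuousOn f (Icc a b)) (hinj : InjOn f (Icc a b)) (hs : s ∈ Ioo a b) :
    ∃ t ∈ Icc a b, f s < f t := by
  have hab : a ≤ b := (hs.1.trans hs.2).le
  rcases hf.strictMonoOn_of_injOn_Icc' hab hinj with hmono | hanti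
  · exact ⟨b, right_mem_Icc.2 hab, hmono (Ioo_subset_Icc_self hs) (right_mem_Icc.2 hab) hs.2⟩
  · exact ⟨a, left_mem_Icc.2 hab, hanti (left_mem_Icc.2 hab) (Ioo_subset_Icc_self hs) hs.1⟩

lemma isEndpoint_of_forall_injOn {X : Type*} [TopologicalSpace X] {x : X}
    (h : ∀ γ : ℝ → X, Continuous γ → InjOn γ (Icc 0 1) → ∀ s ∈ Ioo (0 : ℝ) 1, γ s ≠ x) :
    IsEndpoint x := by
  rintro A ⟨φ⟩ hxA
  set s := φ.symm ⟨x, hxA⟩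
  have hφs : (φ s : X) = x := by simp [s]
  rcases s.2.1.eq_or_lt with h0 | h0
  · have h0s : (⟨0, by norm_num⟩ : Icc (0 : ℝ) 1) = s := Subtype.ext h0
    exact ⟨φ, by rw [h0s, hφs]⟩
  rcases s.2.2.eq_or_lt with h1 | h1
  · have h1s : unitInterval.symm ⟨0, by norm_num⟩ = s := Subtype.ext (by simp [h1])
    exact ⟨unitInterval.symmHomeomorph.trans φ, by simp only [Homeomorph.trans_apply,
      unitInterval.symmHomeomorph_apply, h1s, hφs]⟩
  have hγs : IccExtend zero_le_one (fun t => (φ t : X)) s = x := by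
    rw [IccExtend_of_mem _ _ s.2]; exact hφs
  refine (h _ ?_ ?_ s ⟨h0, h1⟩ hγs).elim
  · exact continuous_IccExtend_iff.2 (continuous_subtype_val.comp φ.continuous)
  · intro a ha b hb hab
    rw [IccExtend_of_mem _ _ ha, IccExtend_of_mem _ _ hb] at hab
    exact congrArg Subtype.val (φ.injective (Subtype.val_injective hab))

lemma div_eq_div_zero_of_succ_div_eq {w v : ℤ → ℝ} (hw : ∀ n, w n ≠ 0) (hv : ∀ n, v n ≠ 0)
    (h : ∀ n, w (n + 1) / w n = v (n + 1) / v n) (n : ℤ) : w n / v n = w 0 / v 0 := by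
  have step : ∀ n, w (n + 1) / v (n + 1) = w n / v n := fun n => by
    have hn := h n
    rw [div_eq_div_iff (hw _) (hv _)] at hn
    rw [div_eq_div_iff (hv _) (hv _)]
    linear_combination hn
  induction n using Int.induction_on with
  | zero => rfl
  | succ n ih => rw [step, ih]
  | pred n ih => rw [← ih, ← step, sub_add_cancel]

/-- By Kronecker's theorem some `j β` is congruent modulo `α` to a point `y` of the interval
shifted left by `j₀ β`; the shifted interval lies left of `0`, which forces `y = j β - i α` with
`i ≥ 0`. -/
lemma exists_nat_mul_sub_nat_mul_mem_Ioo {α β : ℝ} (hα : 0 < α) (hβ : 0 < β)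
    (hirr : Irrational (β / α)) {a b : ℝ} (hab : a < b) :
    ∃ i j : ℕ, j * β - i * α ∈ Ioo a b := by
  have : Fact (0 < α) := ⟨hα⟩
  have hdense : DenseRange fun j : ℕ => j • (β : AddCircle α) :=
    denseRange_zsmul_iff_nsmul.1 (AddCircle.denseRange_zsmul_coe_iff.2 hirr)
  obtain ⟨j₀, hj₀⟩ := exists_nat_ge (b / β)
  rw [div_le_iff₀ hβ] at hj₀
  obtain ⟨j, y, hy, hyj⟩ := hdense.exists_mem_open
    (QuotientAddGroup.isOpenMap_coe _ isOpen_Ioo)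
    ((nonempty_Ioo.2 (sub_lt_sub_right hab (j₀ * β))).image ((↑) : ℝ → AddCircle α))
  rw [← AddCircle.coe_nsmul, QuotientAddGroup.eq_iff_sub_mem,
    AddSubgroup.mem_zmultiples_iff] at hyj
  obtain ⟨k, hk⟩ := hyj
  rw [nsmul_eq_mul, zsmul_eq_mul] at hk
  have hk0 : k < 0 := by
    have : (k : ℝ) * α < 0 := by rw [hk]; nlinarith [hy.2, (j.cast_nonneg : (0 : ℝ) ≤ j)]
    exact_mod_cast neg_of_mul_neg_left this hα.le
  refine ⟨(-k).toNat, j + j₀, ?_⟩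
  have hkc : (((-k).toNat : ℕ) : ℝ) = -k := by exact_mod_cast Int.toNat_of_nonneg (by omega)
  rw [hkc]
  push_cast
  constructor <;> linarith [hy.1, hy.2]

lemma irrational_log_div_neg_log {r ρ : ℝ} (hr : 0 < r) (hr1 : r < 1) (hρ : 1 < ρ)
    (hNC : ∀ k l : ℤ, r ^ k = ρ ^ l ↔ k = 0 ∧ l = 0) :
    Irrational (Real.log ρ / -Real.log r) := by
  have hlr : Real.log r < 0 := Real.log_neg hr hr1
  rw [irrational_iff_ne_rational]
  intro p q hq h
  rw [div_eq_div_iff (neg_pos.2 hlr).ne' (by exact_mod_cast hq)] at h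
  have hpow : r ^ (-p) = ρ ^ q := by
    refine Real.log_injOn_pos (zpow_pos hr _) (zpow_pos (by linarith : (0 : ℝ) < ρ) _) ?_
    rw [Real.log_zpow, Real.log_zpow]
    push_cast
    linarith
  exact hq ((hNC _ _).1 hpow).2

lemma exists_pow_mul_pow_mem_Ioo {r ρ : ℝ} (hr : 0 < r) (hr1 : r < 1) (hρ : 1 < ρ)
    (hirr : Irrational (Real.log ρ / -Real.log r)) {a b : ℝ} (ha : 0 < a) (hab : a < b) :
    ∃ i j : ℕ, r ^ i * ρ ^ j ∈ Ioo a b := by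
  obtain ⟨i, j, hij⟩ := exists_nat_mul_sub_nat_mul_mem_Ioo (neg_pos.2 (Real.log_neg hr hr1))
    (Real.log_pos hρ) hirr (Real.log_lt_log ha hab)
  have hexp : Real.exp (j * Real.log ρ - i * -Real.log r) = r ^ i * ρ ^ j := by
    rw [mul_neg, sub_neg_eq_add, Real.exp_add, Real.exp_nat_mul, Real.exp_nat_mul,
      Real.exp_log (by linarith), Real.exp_log hr, mul_comm]
  refine ⟨i, j, ?_, ?_⟩
  · rw [← hexp, ← Real.log_lt_iff_lt_exp ha]; exact hij.1
  · rw [← hexp, ← Real.lt_log_iff_exp_lt (ha.trans hab)]; exact hij.2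

namespace MahavierShift

variable {r ρ : ℝ}

/-- `w` is a bi-infinite path in the graph `L_{r,ρ}`; the condition `w n ∈ [0, 1]` is kept
separate. -/
def IsOrbit (r ρ : ℝ) (w : ℤ → ℝ) : Prop :=
  ∀ n, w (n + 1) = r * w n ∨ w (n + 1) = ρ * w n

/-- Coordinate `j` of the `i`-th term of a point of the inverse limit depends only on `j - i`,
so the point is a single bi-infinite sequence. As `Int.toNat` sends negatives to `0`, this reads
coordinate `n` of term `0` when `n ≥ 0`, and coordinate `0` of term `-n` when `n < 0`. -/
def orbit (x : invLimit (shiftM r ρ)) (n : ℤ) : ℝ :=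
  (x.1 (-n).toNat).1 n.toNat

lemma coord_eq_coord_add (x : invLimit (shiftM r ρ)) (i j m : ℕ) :
    (x.1 i).1 j = (x.1 (i + m)).1 (j + m) := by
  induction m with
  | zero => rfl
  | succ m ih => rw [ih, x.2 (i + m)]; rfl

lemma coord_eq_of_sub_eq (x : invLimit (shiftM r ρ)) {i j i' j' : ℕ}
    (h : (j : ℤ) - i = j' - i') : (x.1 i).1 j = (x.1 i').1 j' := by
  rcases le_total i i' with hi | hi
  · obtain ⟨m, rfl⟩ := Nat.exists_eq_add_of_le hi
    rw [coord_eq_coord_add x i j m, show j' = j + m by omega]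
  · obtain ⟨m, rfl⟩ := Nat.exists_eq_add_of_le hi
    rw [coord_eq_coord_add x i' j' m, show j = j' + m by omega]

lemma orbit_sub (x : invLimit (shiftM r ρ)) (i j : ℕ) : orbit x (j - i) = (x.1 i).1 j :=
  coord_eq_of_sub_eq x (by omega)

lemma orbit_mem (x : invLimit (shiftM r ρ)) (n : ℤ) : orbit x n ∈ Icc (0 : ℝ) 1 :=
  (x.1 _).2.1 _

lemma isOrbit_orbit (x : invLimit (shiftM r ρ)) : IsOrbit r ρ (orbit x) := by
  intro n
  have h : orbit x (n + 1) = (x.1 (-n).toNat).1 (n.toNat + 1) := by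
    rw [← orbit_sub]; congr 1; omega
  rw [h]
  exact (x.1 _).2.2 _

lemma orbit_injective : Function.Injective (orbit (r := r) (ρ := ρ)) := by
  intro x y h
  ext i j
  simpa only [orbit_sub] using congrFun h (j - i)

lemma isInducing_orbit : IsInducing (orbit (r := r) (ρ := ρ)) := by
  have hcoord : IsInducing fun x : invLimit (shiftM r ρ) => fun i j => (x.1 i).1 j :=
    (IsInducing.piMap fun _ => IsInducing.subtypeVal).comp IsInducing.subtypeVal
  refine .of_comp (g := fun (w : ℤ → ℝ) (i j : ℕ) => w (j - i)) ?_ (by fun_prop) ?_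
  · exact continuous_pi fun n => (continuous_apply _).comp <| continuous_subtype_val.comp <|
      (continuous_apply _).comp continuous_subtype_val
  · have hcomp : (fun (w : ℤ → ℝ) (i j : ℕ) => w (j - i)) ∘ orbit =
        fun x : invLimit (shiftM r ρ) => fun i j => (x.1 i).1 j := by
      ext x i j
      exact orbit_sub x i j
    rwa [hcomp]

lemma continuous_orbit_apply (n : ℤ) :
    Continuous fun x : invLimit (shiftM r ρ) => orbit x n :=
  (continuous_apply n).comp isInducing_orbit.continuous

def ofOrbit (w : ℤ → ℝ) (hw : ∀ n, w n ∈ Icc (0 : ℝ) 1) (ho : IsOrbit r ρ w) :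
    invLimit (shiftM r ρ) :=
  ⟨fun i => ⟨fun j => w (j - i), fun _ => hw _, fun j => by
      simpa [add_sub_right_comm] using ho (j - i)⟩,
    fun i => by ext j; simp [shiftM]⟩

lemma orbit_ofOrbit (w : ℤ → ℝ) (hw : ∀ n, w n ∈ Icc (0 : ℝ) 1) (ho : IsOrbit r ρ w) :
    orbit (ofOrbit w hw ho) = w := by
  ext n
  simp only [orbit, ofOrbit]
  congr 1; omega

lemma IsOrbit.succ_eq_zero_iff {w : ℤ → ℝ} (hw : IsOrbit r ρ w) (hr : r ≠ 0) (hρ : ρ ≠ 0)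
    (n : ℤ) : w (n + 1) = 0 ↔ w n = 0 := by
  rcases hw n with h | h <;> simp [h, hr, hρ]

lemma IsOrbit.eq_zero_iff {w : ℤ → ℝ} (hw : IsOrbit r ρ w) (hr : r ≠ 0) (hρ : ρ ≠ 0)
    (m n : ℤ) : w m = 0 ↔ w n = 0 := by
  suffices h : ∀ n, w n = 0 ↔ w 0 = 0 by rw [h m, h n]
  intro n
  induction n using Int.induction_on with
  | zero => rfl
  | succ n ih => rw [hw.succ_eq_zero_iff hr hρ, ih]
  | pred n ih => rw [← ih, ← hw.succ_eq_zero_iff hr hρ, sub_add_cancel]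

lemma IsOrbit.pos {w : ℤ → ℝ} (hw : IsOrbit r ρ w) (hr : r ≠ 0) (hρ : ρ ≠ 0)
    (hnonneg : ∀ n, 0 ≤ w n) {m : ℤ} (hm : 0 < w m) (n : ℤ) : 0 < w n :=
  (hnonneg n).lt_of_ne' fun h => hm.ne' ((hw.eq_zero_iff hr hρ m n).2 h)

/-- On a preconnected set the ratio `orbit z (n + 1) / orbit z n` is continuous with values in
`{r, ρ}`, hence constant. -/
lemma orbit_div_eq_of_isPreconnected {B : Set (invLimit (shiftM r ρ))} (hB : IsPreconnected B)
    (hpos : ∀ z ∈ B, ∀ n, 0 < orbit z n) {z w : invLimit (shiftM r ρ)} (hz : z ∈ B)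
    (hw : w ∈ B) (n : ℤ) : orbit w n / orbit z n = orbit w 0 / orbit z 0 := by
  refine div_eq_div_zero_of_succ_div_eq (fun n => (hpos w hw n).ne')
    (fun n => (hpos z hz n).ne') (fun n => ?_) n
  refine hB.constant_of_mapsTo (T := {r, ρ}) (Set.toFinite _).isDiscrete
    (fun y hy => ((continuous_orbit_apply _).continuousAt.div
      (continuous_orbit_apply _).continuousAt (hpos y hy n).ne').continuousWithinAt)
    (fun y hy => ?_) hw hz
  rcases isOrbit_orbit y n with h | h <;> simp [h, (hpos y hy n).ne']

lemma le_one_of_orbit_eq_mul {x w : invLimit (shiftM r ρ)} (hx : IsLUB (range (orbit x)) 1)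
    {c : ℝ} (hw : ∀ n, orbit w n = c * orbit x n) : c ≤ 1 := by
  by_contra! hc
  obtain ⟨_, ⟨n, rfl⟩, hn, -⟩ := hx.exists_between (inv_lt_one_of_one_lt₀ hc)
  have h1 : c * c⁻¹ < c * orbit x n := mul_lt_mul_of_pos_left hn (by linarith)
  rw [mul_inv_cancel₀ (by positivity), ← hw] at h1
  exact h1.not_ge (orbit_mem w n).2

theorem isEndpoint_of_isLUB (hr : r ≠ 0) (hρ : ρ ≠ 0) {x : invLimit (shiftM r ρ)}
    (hx : IsLUB (range (orbit x)) 1) : IsEndpoint x := by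
  refine isEndpoint_of_forall_injOn fun γ hγ hinj s hs hγs => ?_
  set f : ℝ → ℝ := fun t => orbit (γ t) 0
  have hf : Continuous f := (continuous_orbit_apply 0).comp hγ
  have hfs : f s = orbit x 0 := by simp [f, hγs]
  have hx0 : 0 < orbit x 0 := by
    obtain ⟨_, ⟨n, rfl⟩, hn, -⟩ := hx.exists_between one_pos
    exact (isOrbit_orbit x).pos hr hρ (fun n => (orbit_mem x n).1) hn 0
  obtain ⟨u, v, -, huv_nhds, huv⟩ := exists_Icc_mem_subset_of_mem_nhds
    (inter_mem (Ioo_mem_nhds hs.1 hs.2)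
      (continuousAt_const.eventually_lt hf.continuousAt (hfs ▸ hx0) :
        ∀ᶠ t in 𝓝 s, 0 < f t))
  have hsuv : s ∈ Ioo u v := by
    rw [← interior_Icc]; exact mem_interior_iff_mem_nhds.2 huv_nhds
  set B := γ '' Icc u v
  have hB : IsPreconnected B := isPreconnected_Icc.image γ hγ.continuousOn
  have hxB : x ∈ B := ⟨s, Ioo_subset_Icc_self hsuv, hγs⟩
  have hpos : ∀ z ∈ B, ∀ n, 0 < orbit z n := by
    rintro _ ⟨t, ht, rfl⟩ n
    exact (isOrbit_orbit _).pos hr hρ (fun n => (orbit_mem _ n).1) (huv ht).2 n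
  have hscale : ∀ t ∈ Icc u v, ∀ n, orbit (γ t) n = f t / orbit x 0 * orbit x n := by
    intro t ht n
    rw [← orbit_div_eq_of_isPreconnected hB hpos hxB (mem_image_of_mem γ ht) n,
      div_mul_cancel₀ _ (hpos x hxB n).ne']
  have hinjf : InjOn f (Icc u v) := by
    intro t₁ h₁ t₂ h₂ h
    refine hinj (Ioo_subset_Icc_self (huv h₁).1) (Ioo_subset_Icc_self (huv h₂).1) ?_
    apply orbit_injective
    ext n
    rw [hscale t₁ h₁, hscale t₂ h₂, h]
  obtain ⟨t, ht, hlt⟩ := hf.continuousOn.exists_lt_of_injOn_Icc hinjf hsuv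
  have hle := le_one_of_orbit_eq_mul hx (hscale t ht)
  rw [div_le_one hx0] at hle
  linarith

def glue (K : ℤ) (a b : ℤ → ℝ) (n : ℤ) : ℝ :=
  if n ≤ K then a n else b n

lemma glue_of_le {K n : ℤ} (a b : ℤ → ℝ) (hn : n ≤ K) : glue K a b n = a n := if_pos hn

lemma glue_of_ge {K n : ℤ} {a b : ℤ → ℝ} (hab : a K = b K) (hn : K ≤ n) :
    glue K a b n = b n := by
  rcases hn.eq_or_lt with rfl | hn
  · exact (if_pos le_rfl).trans hab
  · exact if_neg hn.not_ge

lemma IsOrbit.glue {a b : ℤ → ℝ} (ha : IsOrbit r ρ a) (hb : IsOrbit r ρ b) {K : ℤ}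
    (hab : a K = b K) : IsOrbit r ρ (glue K a b) := by
  intro n
  rcases lt_or_ge n K with h | h
  · rw [glue_of_le _ _ h.le, glue_of_le _ _ (Int.add_one_le_iff.2 h)]
    exact ha n
  · rw [glue_of_ge hab h, glue_of_ge hab (h.trans (Int.le_add_one le_rfl))]
    exact hb n

lemma IsOrbit.const_mul {w : ℤ → ℝ} (hw : IsOrbit r ρ w) (c : ℝ) :
    IsOrbit r ρ fun n => c * w n := fun n => by
  rcases hw n with h | h
  · exact Or.inl (by dsimp only; rw [h]; ring)
  · exact Or.inr (by dsimp only; rw [h]; ring)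

lemma isOrbit_zpow_sub_left (hr : r ≠ 0) (K : ℤ) : IsOrbit r ρ fun n => r ^ (n - K) :=
  fun n => Or.inl (by dsimp only; rw [add_sub_right_comm, zpow_add_one₀ hr, mul_comm])

lemma isOrbit_zpow_sub_right (hρ : ρ ≠ 0) (K : ℤ) : IsOrbit r ρ fun n => ρ ^ (n - K) :=
  fun n => Or.inr (by dsimp only; rw [add_sub_right_comm, zpow_add_one₀ hρ, mul_comm])

noncomputable def peak (r ρ : ℝ) (K : ℤ) : ℤ → ℝ :=
  glue K (fun n => ρ ^ (n - K)) fun n => r ^ (n - K)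

lemma peak_self (K : ℤ) : peak r ρ K K = 1 := by
  simp [peak, glue]

lemma peak_of_le {K n : ℤ} (hn : n ≤ K) : peak r ρ K n = ρ ^ (n - K) :=
  glue_of_le _ _ hn

lemma isOrbit_peak (hr : r ≠ 0) (hρ : ρ ≠ 0) (K : ℤ) : IsOrbit r ρ (peak r ρ K) :=
  (isOrbit_zpow_sub_right hρ K).glue (isOrbit_zpow_sub_left hr K) (by simp)

lemma peak_mem (hr : 0 < r) (hr1 : r ≤ 1) (hρ : 1 ≤ ρ) (K n : ℤ) :
    peak r ρ K n ∈ Icc (0 : ℝ) 1 := by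
  rcases le_or_gt n K with h | h
  · rw [peak_of_le h]
    exact ⟨by positivity, zpow_le_one_of_nonpos₀ hρ (by omega)⟩
  · rw [peak, glue_of_ge (by simp) h.le]
    exact ⟨by positivity, zpow_le_one₀ hr hr1 (by omega)⟩

lemma isLUB_orbit_of_eq_one {z : invLimit (shiftM r ρ)} {K : ℤ} (hK : orbit z K = 1) :
    IsLUB (range (orbit z)) 1 :=
  IsGreatest.isLUB ⟨⟨K, hK⟩, by rintro _ ⟨n, rfl⟩; exact (orbit_mem z n).2⟩

lemma exists_isLUB_orbit_lt (hr : 0 < r) (hr1 : r ≤ 1) (hρ : 1 < ρ) (k : ℤ) {ε : ℝ}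
    (hε : 0 < ε) :
    ∃ z : invLimit (shiftM r ρ), IsLUB (range (orbit z)) 1 ∧ ∀ n ≤ k, orbit z n < ε := by
  obtain ⟨m, hm⟩ := exists_pow_lt_of_lt_one hε (inv_lt_one_of_one_lt₀ hρ)
  refine ⟨ofOrbit (peak r ρ (k + m)) (peak_mem hr hr1 hρ.le _)
    (isOrbit_peak hr.ne' (by positivity) _), isLUB_orbit_of_eq_one (K := k + m) ?_,
    fun n hn => ?_⟩
  · rw [orbit_ofOrbit, peak_self]
  · rw [orbit_ofOrbit, peak_of_le (by omega)]
    calc ρ ^ (n - (k + m)) ≤ ρ ^ (-(m : ℤ)) := zpow_le_zpow_right₀ hρ.le (by omega)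
      _ = ρ⁻¹ ^ m := by rw [zpow_neg, zpow_natCast, inv_pow]
      _ < ε := hm

lemma exists_scale_near_one (hr : 0 < r) (hr1 : r < 1) (hρ : 1 < ρ)
    (hirr : Irrational (Real.log ρ / -Real.log r)) {L c ε : ℝ} (hL : L < 1) (hc : 0 < c)
    (hε : 0 < ε) :
    ∃ μ : ℝ, ∃ i j : ℕ, 1 < μ ∧ μ < 1 + ε ∧ μ * L ≤ 1 ∧ μ * c * r ^ i * ρ ^ j = 1 := by
  have hε' : 0 < (1 + ε)⁻¹ := by positivity
  obtain ⟨i, j, h1, h2⟩ := exists_pow_mul_pow_mem_Ioo hr hr1 hρ hirr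
    (div_pos (hε'.trans_le (le_max_right L _)) hc)
    (div_lt_div_of_pos_right (max_lt hL (inv_lt_one_of_one_lt₀ (by linarith))) hc)
  set v := c * (r ^ i * ρ ^ j)
  have hvL : max L (1 + ε)⁻¹ < v := (div_lt_iff₀' hc).1 h1
  have hv1 : v < 1 := by rwa [lt_div_iff₀' hc] at h2
  have hv0 : 0 < v := hε'.trans (le_max_right L _ |>.trans_lt hvL)
  refine ⟨v⁻¹, i, j, one_lt_inv₀ hv0 |>.2 hv1, ?_, ?_, ?_⟩
  · exact (inv_lt_comm₀ hv0 (by linarith)).2 ((le_max_right L _).trans_lt hvL)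
  · exact inv_mul_le_one_of_le₀ ((le_max_left L _).trans hvL.le) hv0.le
  · rw [mul_assoc, mul_assoc, inv_mul_eq_one₀ hv0.ne']

lemma exists_isLUB_near_of_pos (hr : 0 < r) (hr1 : r < 1) (hρ : 1 < ρ)
    (hirr : Irrational (Real.log ρ / -Real.log r)) {x : invLimit (shiftM r ρ)} {L : ℝ}
    (hL : L < 1) (hxL : ∀ n, orbit x n ≤ L) (hx0 : 0 < orbit x 0) (k : ℤ) {ε : ℝ}
    (hε : 0 < ε) :
    ∃ z : invLimit (shiftM r ρ), IsLUB (range (orbit z)) 1 ∧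
      ∀ n ≤ k, |orbit z n - orbit x n| < ε := by
  have hρ0 : ρ ≠ 0 := by positivity
  have hpos := (isOrbit_orbit x).pos hr.ne' hρ0 (fun n => (orbit_mem x n).1) hx0
  obtain ⟨μ, i, j, hμ1, hμε, hμL, hμij⟩ := exists_scale_near_one hr hr1 hρ hirr hL (hpos k) hε
  have hμx : ∀ n, μ * orbit x n ≤ 1 := fun n =>
    (mul_le_mul_of_nonneg_left (hxL n) (by linarith)).trans hμL
  set a : ℤ → ℝ := fun n => μ * orbit x n
  set b : ℤ → ℝ := fun n => μ * orbit x k * r ^ (n - k)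
  have hbp : b (k + i) = peak r ρ (k + i + j) (k + i) := by
    simp only [b]
    rw [peak_of_le (by omega), add_sub_cancel_left, show k + i - (k + i + j) = -(j : ℤ) by ring,
      zpow_neg, zpow_natCast, zpow_natCast]
    exact eq_inv_of_mul_eq_one_left hμij
  have hab : a k = glue (k + i) b (peak r ρ (k + i + j)) k := by
    rw [glue_of_le _ _ (by omega)]
    simp [a, b]
  have hw : IsOrbit r ρ (glue k a (glue (k + i) b (peak r ρ (k + i + j)))) :=
    ((isOrbit_orbit x).const_mul μ).glue
      (((isOrbit_zpow_sub_left hr.ne' k).const_mul _).glue (isOrbit_peak hr.ne' hρ0 _) hbp) hab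
  have hmem : ∀ n, glue k a (glue (k + i) b (peak r ρ (k + i + j))) n ∈ Icc (0 : ℝ) 1 := by
    intro n
    rcases le_or_gt n k with h₁ | h₁
    · rw [glue_of_le _ _ h₁]
      exact ⟨(mul_pos (by linarith) (hpos n)).le, hμx n⟩
    rw [glue_of_ge hab h₁.le]
    rcases le_or_gt n (k + i) with h₂ | h₂
    · rw [glue_of_le _ _ h₂]
      have hc := mul_pos (by linarith : (0 : ℝ) < μ) (hpos k)
      refine ⟨by positivity, ?_⟩
      exact (mul_le_of_le_one_right hc.le (zpow_le_one₀ hr hr1.le (by omega))).trans (hμx k)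
    · rw [glue_of_ge hbp h₂.le]
      exact peak_mem hr hr1.le hρ.le _ _
  refine ⟨ofOrbit _ hmem hw, isLUB_orbit_of_eq_one (K := k + i + j) ?_, fun n hn => ?_⟩
  · rw [orbit_ofOrbit, glue_of_ge hab (by omega), glue_of_ge hbp (by omega), peak_self]
  · rw [orbit_ofOrbit, glue_of_le _ _ hn, ← sub_one_mul,
      abs_of_nonneg (mul_nonneg (by linarith) (orbit_mem x n).1)]
    calc (μ - 1) * orbit x n ≤ μ - 1 := mul_le_of_le_one_right (by linarith) (orbit_mem x n).2
      _ < ε := by linarith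

lemma exists_isLUB_near (hr : 0 < r) (hr1 : r < 1) (hρ : 1 < ρ)
    (hirr : Irrational (Real.log ρ / -Real.log r)) (x : invLimit (shiftM r ρ)) (k : ℤ) {ε : ℝ}
    (hε : 0 < ε) :
    ∃ z : invLimit (shiftM r ρ), IsLUB (range (orbit z)) 1 ∧
      ∀ n ≤ k, |orbit z n - orbit x n| < ε := by
  by_cases hx : IsLUB (range (orbit x)) 1
  · exact ⟨x, hx, fun n _ => by simpa using hε⟩
  rcases (orbit_mem x 0).1.eq_or_lt with hx0 | hx0
  · obtain ⟨z, hz, hzk⟩ := exists_isLUB_orbit_lt hr hr1.le hρ k hε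
    refine ⟨z, hz, fun n hn => ?_⟩
    rw [((isOrbit_orbit x).eq_zero_iff hr.ne' (by positivity) n 0).2 hx0.symm, sub_zero,
      abs_of_nonneg (orbit_mem z n).1]
    exact hzk n hn
  have hub : 1 ∈ upperBounds (range (orbit x)) := by
    rintro _ ⟨n, rfl⟩
    exact (orbit_mem x n).2
  have hsup := isLUB_csSup (range_nonempty (orbit x)) ⟨1, hub⟩
  have hsup1 : sSup (range (orbit x)) < 1 := (hsup.2 hub).lt_of_ne fun h => hx (h ▸ hsup)
  exact exists_isLUB_near_of_pos hr hr1 hρ hirr hsup1 (fun n => hsup.1 ⟨n, rfl⟩) hx0 k hε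

lemma mem_closure_of_forall_exists_near {S : Set (invLimit (shiftM r ρ))}
    {x : invLimit (shiftM r ρ)}
    (h : ∀ k : ℕ, ∀ ε > 0, ∃ z ∈ S, ∀ n ≤ (k : ℤ), |orbit z n - orbit x n| < ε) :
    x ∈ closure S := by
  choose z hzS hz using fun k : ℕ => h k (1 / (k + 1)) Nat.one_div_pos_of_nat
  refine mem_closure_of_tendsto (b := atTop) ?_ (Eventually.of_forall hzS)
  rw [isInducing_orbit.tendsto_nhds_iff, tendsto_pi_nhds]
  intro n
  refine tendsto_iff_dist_tendsto_zero.2 <| squeeze_zero'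
    (Eventually.of_forall fun _ => dist_nonneg) ?_ tendsto_one_div_add_atTop_nhds_zero_nat
  filter_upwards [eventually_ge_atTop n.toNat] with k hk
  exact (hz k n (by omega)).le

end MahavierShift

open MahavierShift

/-- The set of end-points of `M = varprojlim(M_{r,ρ}, σ_{r,ρ})` is dense in `M`. -/
theorem stmt15 (r ρ : ℝ) (h : NC r ρ) :
    Dense {x : invLimit (shiftM r ρ) | IsEndpoint x} := by
  obtain ⟨hr, hr1, hρ, hNC⟩ := h
  refine fun x => mem_closure_of_forall_exists_near fun k ε hε => ?_
  obtain ⟨z, hz, hzx⟩ :=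
    exists_isLUB_near hr hr1 hρ (irrational_log_div_neg_log hr hr1 hρ hNC) x k hε
  exact ⟨z, isEndpoint_of_isLUB hr.ne' (by positivity) hz, hzx⟩
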